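/- arXiv:2004.02167 — 2 statements merged into one kernel-verified Lean document; each statement's English description precedes it below -/
import Mathlib

section
/- Let Δ > 0 and p > 0, set μ = Δ/(Δ + p), and let (I_k)_{k≥1} be i.i.d. Bernoulli(μ) random variables with Î_k = Σ_{j=1}^k I_j. Let (α_k)_{k≥1} be positive reals with α_k/k → 0 and log(k/α_k)/k → 0 as k → ∞. Define x_k = p·Î_k/(k + α_k − Î_k). Then there exist a constant C > 0 and an index K such that for all k ≥ K, E|x_k − Δ| ≤ C·max{k^{−1/2}, α_k/k}. -/
/-!
Write `S = Î_k` and `Δ = p μ / (1 - μ)`. Then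
`x_k - Δ = p (S - μ k - μ α_k) / ((1 - μ) (k + α_k - S))`, so on the event `S < (1 + μ) k / 2`,
where the denominator is at least `(1 - μ)² k / 2`, we get `|x_k - Δ| ≲ (|S - μ k| + α_k) / k`,
and `E|S - μ k| ≤ √(Var S) ≤ √k / 2`. On the complementary event, which by Hoeffding has
probability at most `exp (-(1 - μ)² k / 2)`, the crude bound `|x_k - Δ| ≤ p k / α_k + Δ` suffices:
since `log (k / α_k) = o(k)`, this contribution is eventually below `k^(-1/2)`.
-/

open MeasureTheory ProbabilityTheory Filter Real Finset Topology

lemma integral_eq_of_forall_eq_zero_or_eq_one {Ω : Type*} [MeasurableSpace Ω] {P : Measure Ω}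
    {Y : Ω → ℝ} (hY : Measurable Y) (hvals : ∀ ω, Y ω = 0 ∨ Y ω = 1) {μ : ℝ} (hμ : 0 ≤ μ)
    (h : P {ω | Y ω = 1} = ENNReal.ofReal μ) :
    ∫ ω, Y ω ∂P = μ := by
  calc ∫ ω, Y ω ∂P = ∫ ω, {ω | Y ω = 1}.indicator 1 ω ∂P := by
        congr 1
        funext ω
        rcases hvals ω with h0 | h1 <;> simp [*]
    _ = μ := by
        rw [integral_indicator_one (s := {ω | Y ω = 1}) (hY (measurableSet_singleton 1)),
          measureReal_def, h, ENNReal.toReal_ofReal hμ]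

section Estimator

variable {p μ k a s : ℝ}

lemma abs_estimator_sub_le (hp : 0 ≤ p) (hμ0 : 0 ≤ μ) (hμ1 : μ < 1) (ha : 0 < a)
    (hs0 : 0 ≤ s) (hsk : s ≤ k) :
    |p * s / (k + a - s) - p * μ / (1 - μ)| ≤ p * k / a + p * μ / (1 - μ) := by
  have hΔ : 0 ≤ p * μ / (1 - μ) := div_nonneg (mul_nonneg hp hμ0) (by linarith)
  have hx0 : 0 ≤ p * s / (k + a - s) := div_nonneg (mul_nonneg hp hs0) (by linarith)
  have hxk : p * s / (k + a - s) ≤ p * k / a :=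
    div_le_div₀ (mul_nonneg hp (hs0.trans hsk)) (mul_le_mul_of_nonneg_left hsk hp) ha (by linarith)
  rw [abs_le]
  constructor <;> linarith

lemma abs_estimator_sub_le_of_le (hp : 0 ≤ p) (hμ0 : 0 ≤ μ) (hμ1 : μ < 1) (hk : 0 < k)
    (ha : 0 ≤ a) (hs : s ≤ (1 + μ) / 2 * k) :
    |p * s / (k + a - s) - p * μ / (1 - μ)| ≤ 2 * p / (1 - μ) ^ 2 * ((|s - μ * k| + a) / k) := by
  have h1μ : 0 < 1 - μ := by linarith
  have hden : (1 - μ) / 2 * k ≤ k + a - s := by nlinarith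
  have hden0 : 0 < (1 - μ) / 2 * k := by positivity
  have hdiff : p * s / (k + a - s) - p * μ / (1 - μ) =
      p * (s - μ * k - μ * a) / ((1 - μ) * (k + a - s)) := by
    field_simp [(hden0.trans_le hden).ne']
    ring
  have hnum : |s - μ * k - μ * a| ≤ |s - μ * k| + a := by
    calc |s - μ * k - μ * a| ≤ |s - μ * k| + |μ * a| := abs_sub _ _
      _ ≤ |s - μ * k| + a := by
        rw [abs_of_nonneg (mul_nonneg hμ0 ha)]; nlinarith
  rw [hdiff, abs_div, abs_mul, abs_of_nonneg hp, abs_of_pos (mul_pos h1μ (hden0.trans_le hden))]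
  calc p * |s - μ * k - μ * a| / ((1 - μ) * (k + a - s))
      ≤ p * (|s - μ * k| + a) / ((1 - μ) * ((1 - μ) / 2 * k)) := by gcongr
    _ = 2 * p / (1 - μ) ^ 2 * ((|s - μ * k| + a) / k) := by field_simp

end Estimator

section BoundedSums

variable {Ω ι : Type*} [MeasurableSpace Ω] {P : Measure Ω} [IsProbabilityMeasure P]

lemma integral_abs_sub_integral_le_sqrt_variance {X : Ω → ℝ} (hX : MemLp X 2 P) :
    ∫ ω, |X ω - P[X]| ∂P ≤ √(variance X P) := by
  have hY : MemLp (fun ω => |X ω - P[X]|) 2 P := (hX.sub (memLp_const _)).abs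
  have hsq : (∫ ω, |X ω - P[X]| ∂P) ^ 2 ≤ variance X P := by
    have := variance_nonneg (fun ω => |X ω - P[X]|) P
    rw [variance_eq_sub hY] at this
    rw [variance_eq_integral hX.aemeasurable]
    simpa using this
  exact (le_abs_self _).trans (abs_le_sqrt hsq)

lemma integral_abs_estimator_sub_le {S : Ω → ℝ} (hS : Measurable S) {p μ k a : ℝ} (hp : 0 ≤ p)
    (hμ0 : 0 ≤ μ) (hμ1 : μ < 1) (hk : 0 < k) (ha : 0 < a) (hS0 : ∀ ω, 0 ≤ S ω)
    (hSk : ∀ ω, S ω ≤ k) :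
    ∫ ω, |p * S ω / (k + a - S ω) - p * μ / (1 - μ)| ∂P ≤
      2 * p / (1 - μ) ^ 2 * ((∫ ω, |S ω - μ * k| ∂P + a) / k) +
        (p * k / a + p * μ / (1 - μ)) * P.real {ω | (1 + μ) / 2 * k ≤ S ω} := by
  set B := {ω | (1 + μ) / 2 * k ≤ S ω}
  have hB : MeasurableSet B := measurableSet_le measurable_const hS
  have hbound : ∀ ω, |p * S ω / (k + a - S ω) - p * μ / (1 - μ)| ≤
      2 * p / (1 - μ) ^ 2 * ((|S ω - μ * k| + a) / k) +
        B.indicator (fun _ => p * k / a + p * μ / (1 - μ)) ω := by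
    intro ω
    by_cases hω : ω ∈ B
    · rw [Set.indicator_of_mem hω]
      have : 0 ≤ 2 * p / (1 - μ) ^ 2 * ((|S ω - μ * k| + a) / k) := by positivity
      linarith [abs_estimator_sub_le hp hμ0 hμ1 ha (hS0 ω) (hSk ω)]
    · rw [Set.indicator_of_notMem hω, add_zero]
      exact abs_estimator_sub_le_of_le hp hμ0 hμ1 hk ha.le (not_le.mp hω).le
  have hdev : Integrable (fun ω => |S ω - μ * k|) P :=
    Integrable.of_mem_Icc 0 (k + μ * k) ((hS.sub_const _).abs).aemeasurable
      (.of_forall fun ω => ⟨abs_nonneg _, by rw [abs_le]; constructor <;> nlinarith [hS0 ω, hSk ω]⟩)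
  have hlhs : Integrable (fun ω => |p * S ω / (k + a - S ω) - p * μ / (1 - μ)| ) P :=
    Integrable.of_mem_Icc 0 (p * k / a + p * μ / (1 - μ))
      ((((hS.const_mul p).div (measurable_const.sub hS)).sub_const _).abs).aemeasurable
      (.of_forall fun ω => ⟨abs_nonneg _, abs_estimator_sub_le hp hμ0 hμ1 ha (hS0 ω) (hSk ω)⟩)
  have hgood : Integrable (fun ω => 2 * p / (1 - μ) ^ 2 * ((|S ω - μ * k| + a) / k)) P :=
    ((hdev.add (integrable_const a)).div_const k).const_mul _
  calc ∫ ω, |p * S ω / (k + a - S ω) - p * μ / (1 - μ)| ∂P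
      ≤ ∫ ω, (2 * p / (1 - μ) ^ 2 * ((|S ω - μ * k| + a) / k) +
          B.indicator (fun _ => p * k / a + p * μ / (1 - μ)) ω) ∂P :=
        integral_mono hlhs (hgood.add ((integrable_const _).indicator hB)) hbound
    _ = _ := by
      rw [integral_add hgood ((integrable_const _).indicator hB), integral_indicator_const _ hB,
        integral_const_mul, integral_div, integral_add hdev (integrable_const a)]
      simp only [integral_const, probReal_univ, smul_eq_mul, one_mul]
      ring

variable {X : ι → Ω → ℝ} {μ : ℝ} (hmeas : ∀ i, Measurable (X i))
  (hX01 : ∀ i ω, X i ω ∈ Set.Icc (0 : ℝ) 1) (hmean : ∀ i, P[X i] = μ) (hindep : iIndepFun X P)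
  (s : Finset ι)
include hmeas hX01 hmean hindep

lemma integral_abs_sum_sub_card_mul_le :
    ∫ ω, |∑ i ∈ s, X i ω - #s * μ| ∂P ≤ √(#s : ℝ) / 2 := by
  have hL2 : ∀ i, MemLp (X i) 2 P := fun i =>
    memLp_of_bounded (.of_forall (hX01 i)) (hmeas i).aestronglyMeasurable 2
  have hmeanS : ∫ ω, ∑ i ∈ s, X i ω ∂P = #s * μ := by
    rw [integral_finsetSum s fun i _ => (hL2 i).integrable one_le_two]
    simp [hmean]
  have hvar : variance (∑ i ∈ s, X i) P ≤ #s / 4 := by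
    rw [IndepFun.variance_sum (fun i _ => hL2 i) fun i _ j _ hij => hindep.indepFun hij]
    calc ∑ i ∈ s, variance (X i) P ≤ ∑ _i ∈ s, ((1 - 0) / 2 : ℝ) ^ 2 :=
          sum_le_sum fun i _ =>
            variance_le_sq_of_bounded (.of_forall (hX01 i)) (hmeas i).aemeasurable
      _ = #s / 4 := by
          simp only [sub_zero, one_div, inv_pow, sum_const, nsmul_eq_mul]
          ring
  calc ∫ ω, |∑ i ∈ s, X i ω - #s * μ| ∂P
      = ∫ ω, |(∑ i ∈ s, X i) ω - P[∑ i ∈ s, X i]| ∂P := by simp only [Finset.sum_apply, hmeanS]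
    _ ≤ √(variance (∑ i ∈ s, X i) P) :=
        integral_abs_sub_integral_le_sqrt_variance (memLp_finsetSum' s fun i _ => hL2 i)
    _ ≤ √((#s : ℝ) / 4) := sqrt_le_sqrt hvar
    _ = √(#s : ℝ) / 2 := by rw [sqrt_div' _ (by norm_num : (0:ℝ) ≤ 4)]; norm_num

lemma measureReal_card_mul_add_le_sum_le {ε : ℝ} (hε : 0 ≤ ε) :
    P.real {ω | #s * μ + ε ≤ ∑ i ∈ s, X i ω} ≤ exp (-2 * ε ^ 2 / #s) := by
  have hsubG : ∀ i ∈ s, HasSubgaussianMGF (fun ω => X i ω - μ) ((‖(1 : ℝ) - 0‖₊ / 2) ^ 2) P :=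
    fun i _ => hmean i ▸ hasSubgaussianMGF_of_mem_Icc (hmeas i).aemeasurable (.of_forall (hX01 i))
  have hindep' : iIndepFun (fun i ω => X i ω - μ) P :=
    hindep.comp (fun _ x => x - μ) fun _ => measurable_sub_const μ
  have hcentred : ∀ ω, ∑ i ∈ s, (X i ω - μ) = ∑ i ∈ s, X i ω - #s * μ := fun ω => by
    rw [sum_sub_distrib, sum_const, nsmul_eq_mul]
  calc P.real {ω | #s * μ + ε ≤ ∑ i ∈ s, X i ω}
      = P.real {ω | ε ≤ ∑ i ∈ s, (X i ω - μ)} := by simp_rw [hcentred, le_sub_iff_add_le']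
    _ ≤ exp (-ε ^ 2 / (2 * ∑ i ∈ s, ((‖(1 : ℝ) - 0‖₊ / 2) ^ 2 : NNReal))) :=
        HasSubgaussianMGF.measure_sum_ge_le_of_iIndepFun hindep' hsubG hε
    _ = exp (-2 * ε ^ 2 / #s) := by
        congr 1
        simp only [sub_zero, nnnorm_one, one_div, inv_pow, sum_const, nsmul_eq_mul, NNReal.coe_mul,
          NNReal.coe_natCast, NNReal.coe_inv, NNReal.coe_pow, NNReal.coe_ofNat, neg_mul]
        ring

lemma integral_abs_estimator_sum_sub_le (hμ0 : 0 ≤ μ) (hμ1 : μ < 1) (hs : s.Nonempty)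
    {p a : ℝ} (hp : 0 ≤ p) (ha : 0 < a) :
    ∫ ω, |p * (∑ i ∈ s, X i ω) / (#s + a - ∑ i ∈ s, X i ω) - p * μ / (1 - μ)| ∂P ≤
      2 * p / (1 - μ) ^ 2 * ((√(#s : ℝ) / 2 + a) / #s) +
        (p * #s / a + p * μ / (1 - μ)) * exp (-((1 - μ) ^ 2 / 2 * #s)) := by
  have hk : (0 : ℝ) < #s := Nat.cast_pos.mpr hs.card_pos
  have hsum01 : ∀ ω, ∑ i ∈ s, X i ω ∈ Set.Icc (0 : ℝ) #s := fun ω =>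
    ⟨sum_nonneg fun i _ => (hX01 i ω).1,
      (sum_le_sum fun i _ => (hX01 i ω).2).trans_eq (by simp)⟩
  refine (integral_abs_estimator_sub_le (Finset.measurable_sum s fun i _ => hmeas i) hp hμ0 hμ1
    hk ha (fun ω => (hsum01 ω).1) (fun ω => (hsum01 ω).2)).trans ?_
  gcongr
  · simpa only [mul_comm μ] using integral_abs_sum_sub_card_mul_le hmeas hX01 hmean hindep s
  · have hε : 0 ≤ (1 - μ) / 2 * #s := by nlinarith
    have hthreshold : (1 + μ) / 2 * #s = #s * μ + (1 - μ) / 2 * #s := by ring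
    have hrate : -2 * ((1 - μ) / 2 * #s) ^ 2 / #s = -((1 - μ) ^ 2 / 2 * (#s : ℝ)) := by
      field_simp
    rw [hthreshold, ← hrate]
    exact measureReal_card_mul_add_le_sum_le hmeas hX01 hmean hindep s hε

end BoundedSums

lemma eventually_mul_div_add_mul_exp_neg_le_rpow {α : ℕ → ℝ} (hα : ∀ k, 0 < α k)
    (hαk : Tendsto (fun k : ℕ => α k / k) atTop (𝓝 0))
    (hlog : Tendsto (fun k : ℕ => log (k / α k) / k) atTop (𝓝 0))
    {A B c : ℝ} (hA : 0 < A) (hB : 0 ≤ B) (hc : 0 < c) :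
    ∀ᶠ k : ℕ in atTop, (A * k / α k + B) * exp (-(c * k)) ≤ (k : ℝ) ^ (-(1 / 2 : ℝ)) := by
  have hexponent : Tendsto (fun k : ℕ => (log (A + B) + log (k / α k) + 1 / 2 * log k) / k)
      atTop (𝓝 0) := by
    have hlogk : Tendsto (fun k : ℕ => log k / k) atTop (𝓝 0) :=
      isLittleO_log_id_atTop.tendsto_div_nhds_zero.comp tendsto_natCast_atTop_atTop
    have := ((tendsto_const_div_atTop_nhds_zero_nat (log (A + B))).add hlog).add
      (hlogk.const_mul (1 / 2))
    rw [mul_zero, add_zero, add_zero] at this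
    exact this.congr fun k => by ring
  filter_upwards [hexponent.eventually_lt_const hc, hαk.eventually_lt_const one_pos,
    eventually_gt_atTop 0] with k hexp hαk1 hk
  have hk' : (0 : ℝ) < k := Nat.cast_pos.mpr hk
  have hkα : 1 ≤ k / α k := by
    rw [div_lt_one hk'] at hαk1
    rw [one_le_div (hα k)]
    exact hαk1.le
  rw [div_lt_iff₀ hk'] at hexp
  calc (A * k / α k + B) * exp (-(c * k))
      ≤ (A + B) * (k / α k) * exp (-(c * k)) := by
        gcongr
        rw [mul_div_assoc]
        nlinarith
    _ = exp (log (A + B) + log (k / α k) - c * k) := by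
        rw [exp_sub, exp_add, exp_log (by positivity), exp_log (by positivity), exp_neg]
        ring
    _ ≤ exp (log k * (-(1 / 2))) := exp_le_exp.mpr (by linarith)
    _ = (k : ℝ) ^ (-(1 / 2 : ℝ)) := (rpow_def_of_pos hk' _).symm

/-- convergence rate of the LLN estimator. If additionally
`log (k / α_k) / k → 0`, then eventually `E|x_k - Δ| ≤ C max (k^{-1/2}) (α_k / k)`. -/
theorem lln_estimator_rate
    {Ω : Type*} [MeasurableSpace Ω] (P : Measure Ω) [IsProbabilityMeasure P]
    (Δ p : ℝ) (hΔ : 0 < Δ) (hp : 0 < p)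
    (μ : ℝ) (hμ : μ = Δ / (Δ + p))
    (I : ℕ → Ω → ℝ) (hmeas : ∀ k, Measurable (I k))
    (hvals : ∀ k ω, I k ω = 0 ∨ I k ω = 1)
    (hber : ∀ k, P {ω | I k ω = 1} = ENNReal.ofReal μ)
    (hindep : iIndepFun I P)
    (α : ℕ → ℝ) (hα : ∀ k, 0 < α k)
    (hαk : Tendsto (fun k : ℕ => α k / k) atTop (nhds 0))
    (hlog : Tendsto (fun k : ℕ => Real.log (k / α k) / k) atTop (nhds 0))
    (x : ℕ → Ω → ℝ)
    (hx : ∀ k ω, x k ω =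
      p * (∑ j ∈ Finset.Icc 1 k, I j ω) / (k + α k - ∑ j ∈ Finset.Icc 1 k, I j ω)) :
    ∃ C > 0, ∃ K : ℕ, ∀ k ≥ K,
      ∫ ω, |x k ω - Δ| ∂P ≤ C * max ((k : ℝ) ^ (-(1/2 : ℝ))) (α k / k) := by
  have hμ0 : 0 ≤ μ := hμ ▸ div_nonneg hΔ.le (by linarith)
  have hμ1 : μ < 1 := by rw [hμ, div_lt_one (by linarith)]; linarith
  have hΔμ : Δ = p * μ / (1 - μ) := by
    have h1μ : 1 - μ = p / (Δ + p) := by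
      rw [hμ]
      field_simp
      ring
    rw [h1μ, hμ]
    field_simp
  have hI01 : ∀ j ω, I j ω ∈ Set.Icc (0 : ℝ) 1 := fun j ω => by
    rcases hvals j ω with h | h <;> simp [h]
  have hmean : ∀ j, ∫ ω, I j ω ∂P = μ := fun j =>
    integral_eq_of_forall_eq_zero_or_eq_one (hmeas j) (hvals j) hμ0 (hber j)
  set C := 2 * p / (1 - μ) ^ 2
  have hstep : ∀ k : ℕ, 0 < k → ∫ ω, |x k ω - Δ| ∂P ≤
      C * ((√(k : ℝ) / 2 + α k) / k) + (p * k / α k + Δ) * exp (-((1 - μ) ^ 2 / 2 * k)) := by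
    intro k hk
    simpa [hx, hΔμ] using integral_abs_estimator_sum_sub_le hmeas hI01 hmean hindep (Icc 1 k) hμ0
      hμ1 (nonempty_Icc.mpr hk) hp.le (hα k)
  have htail := eventually_mul_div_add_mul_exp_neg_le_rpow hα hαk hlog hp hΔ.le
    (c := (1 - μ) ^ 2 / 2) (by nlinarith)
  obtain ⟨K, hK⟩ := eventually_atTop.mp (htail.and (eventually_gt_atTop 0))
  refine ⟨2 * C + 1, by positivity, K, fun k hk => ?_⟩
  obtain ⟨htailk, hk0⟩ := hK k hk
  have hsqrt : (√(k : ℝ) / 2 + α k) / k = (k : ℝ) ^ (-(1 / 2 : ℝ)) / 2 + α k / k := by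
    rw [rpow_neg (Nat.cast_nonneg k), ← sqrt_eq_rpow, ← one_div, ← sqrt_div_self']
    ring
  have hC : 0 ≤ C := by positivity
  have h1 := le_max_left ((k : ℝ) ^ (-(1 / 2 : ℝ))) (α k / k)
  have h2 := le_max_right ((k : ℝ) ^ (-(1 / 2 : ℝ))) (α k / k)
  calc ∫ ω, |x k ω - Δ| ∂P
      ≤ C * ((k : ℝ) ^ (-(1 / 2 : ℝ)) / 2 + α k / k) + (k : ℝ) ^ (-(1 / 2 : ℝ)) := by
        rw [← hsqrt]
        linarith [hstep k hk0]
    _ ≤ (2 * C + 1) * max ((k : ℝ) ^ (-(1 / 2 : ℝ))) (α k / k) := by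
        have hA0 : 0 ≤ (k : ℝ) ^ (-(1 / 2 : ℝ)) := by positivity
        nlinarith [mul_le_mul_of_nonneg_left (add_le_add h1 h2) hC]
end

section
/- Let Δ > 0 and p > 0, set μ = Δ/(Δ + p), and let (I_k)_{k≥1} be i.i.d. Bernoulli(μ) random variables. Let (η_k)_{k≥0} be a sequence of positive reals with Σ_{k≥0} η_k = ∞ and Σ_{k≥0} η_k² < ∞. Let y_0 ∈ ℝ be arbitrary and define recursively y_{k+1} = y_k + η_k·(I_{k+1}·(y_k + p) − y_k) for k ≥ 0. Then y_k → Δ almost surely as k → ∞. -/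
/-!
Write `Y k := η k * (I (k + 1) - μ)`. The `Y k` are independent and centred with
`Var Y k ≤ η k ^ 2 / 4`, so their partial sums form an `L²`-bounded martingale, which converges
almost surely. Along such a sample path, `u k := y k - Δ` obeys
`u (k + 1) = (1 - d k) * u k + (Δ + p) * Y k` with `d k = η k * (1 - I (k + 1)) ∈ [0, η k]`,
and `∑ d k = (1 - μ) ∑ η k - ∑ Y k = ∞`. Subtracting the tail of the convergent noise series
turns this into a convex combination of `u k` and a null sequence, whose contraction factors
`∏ (1 - d k) ≤ exp (-∑ d k)` force `u k → 0`.
-/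

open MeasureTheory ProbabilityTheory Filter Finset Topology

theorem tendsto_zero_of_le_one_sub_mul {w d : ℕ → ℝ} (hw : ∀ n, 0 ≤ w n)
    (hstep : ∀ᶠ n in atTop, w (n + 1) ≤ (1 - d n) * w n)
    (hd : Tendsto (fun n => ∑ k ∈ range n, d k) atTop atTop) :
    Tendsto w atTop (𝓝 0) := by
  obtain ⟨N, hN⟩ := eventually_atTop.1 hstep
  set D := fun n => ∑ k ∈ range n, d k
  -- `w n * exp (D n)` is antitone from `N` on, since `1 - x ≤ exp (-x)`.
  have hmono : ∀ n, N ≤ n → w n * Real.exp (D n) ≤ w N * Real.exp (D N) := by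
    intro n hn
    induction n, hn using Nat.le_induction with
    | base => rfl
    | succ n hn ih =>
      have hexp : (1 - d n) * Real.exp (d n) ≤ 1 := by
        have := Real.add_one_le_exp (-d n)
        calc (1 - d n) * Real.exp (d n) ≤ Real.exp (-d n) * Real.exp (d n) := by
              gcongr; linarith
          _ = 1 := by rw [← Real.exp_add, neg_add_cancel, Real.exp_zero]
      calc w (n + 1) * Real.exp (D (n + 1))
          ≤ (1 - d n) * w n * Real.exp (D n + d n) := by
            rw [show D (n + 1) = D n + d n from sum_range_succ d n]
            gcongr; exact hN n hn
        _ = ((1 - d n) * Real.exp (d n)) * (w n * Real.exp (D n)) := by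
            rw [Real.exp_add]; ring
        _ ≤ w n * Real.exp (D n) :=
            mul_le_of_le_one_left (mul_nonneg (hw n) (Real.exp_pos _).le) hexp
        _ ≤ _ := ih
  have hbound : Tendsto (fun n => w N * Real.exp (D N) * Real.exp (-D n)) atTop (𝓝 0) := by
    simpa using (Real.tendsto_exp_atBot.comp (tendsto_neg_atTop_atBot.comp hd)).const_mul
      (w N * Real.exp (D N))
  refine tendsto_of_tendsto_of_tendsto_of_le_of_le' tendsto_const_nhds hbound
    (Eventually.of_forall hw) ?_
  filter_upwards [eventually_ge_atTop N] with n hn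
  rw [Real.exp_neg, ← div_eq_mul_inv, le_div_iff₀ (Real.exp_pos _)]
  exact hmono n hn

theorem tendsto_zero_of_eq_one_sub_mul_add_mul {z d e : ℕ → ℝ}
    (hz : ∀ n, z (n + 1) = (1 - d n) * z n + d n * e n)
    (hd01 : ∀ᶠ n in atTop, d n ∈ Set.Icc 0 1)
    (hd : Tendsto (fun n => ∑ k ∈ range n, d k) atTop atTop)
    (he : Tendsto e atTop (𝓝 0)) :
    Tendsto z atTop (𝓝 0) := by
  rw [Metric.tendsto_nhds]
  intro ε hε
  set w := fun n => max (|z n| - ε / 2) 0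
  have hstep : ∀ᶠ n in atTop, w (n + 1) ≤ (1 - d n) * w n := by
    have he' : ∀ᶠ n in atTop, |e n| ≤ ε / 2 :=
      he.abs.eventually_le_const (by simpa using half_pos hε)
    filter_upwards [hd01, he'] with n ⟨hd0, hd1⟩ hen
    have hzn : |z (n + 1)| ≤ (1 - d n) * |z n| + d n * (ε / 2) := by
      calc |z (n + 1)| ≤ |(1 - d n) * z n| + |d n * e n| := hz n ▸ abs_add_le _ _
        _ = (1 - d n) * |z n| + d n * |e n| := by
            rw [abs_mul, abs_mul, abs_of_nonneg (sub_nonneg.2 hd1), abs_of_nonneg hd0]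
        _ ≤ (1 - d n) * |z n| + d n * (ε / 2) := by gcongr
    refine max_le ?_ (mul_nonneg (sub_nonneg.2 hd1) (le_max_right _ _))
    calc |z (n + 1)| - ε / 2 ≤ (1 - d n) * (|z n| - ε / 2) := by linarith
      _ ≤ (1 - d n) * w n := mul_le_mul_of_nonneg_left (le_max_left _ _) (sub_nonneg.2 hd1)
  have hw := tendsto_zero_of_le_one_sub_mul (w := w) (fun n => le_max_right _ _) hstep hd
  filter_upwards [hw.eventually_lt_const (half_pos hε)] with n hn
  rw [Real.dist_eq, sub_zero]
  linarith [le_max_left (|z n| - ε / 2) 0]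

theorem tendsto_zero_of_eq_one_sub_mul_add_sub {u d s : ℕ → ℝ} {L : ℝ}
    (hu : ∀ n, u (n + 1) = (1 - d n) * u n + (s (n + 1) - s n))
    (hd01 : ∀ᶠ n in atTop, d n ∈ Set.Icc 0 1)
    (hd : Tendsto (fun n => ∑ k ∈ range n, d k) atTop atTop)
    (hs : Tendsto s atTop (𝓝 L)) :
    Tendsto u atTop (𝓝 0) := by
  have hLs : Tendsto (fun n => L - s n) atTop (𝓝 0) := by
    simpa using (tendsto_const_nhds (x := L)).sub hs
  have hz : Tendsto (fun n => u n + (L - s n)) atTop (𝓝 0) :=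
    tendsto_zero_of_eq_one_sub_mul_add_mul (fun n => by rw [hu n]; ring) hd01 hd hLs
  simpa using hz.sub hLs

theorem tendsto_of_sa_recursion {Δ p μ : ℝ} (hp : 0 < p) (hΔp : 0 < Δ + p)
    (hμ : μ = Δ / (Δ + p)) {η a y : ℕ → ℝ} (hη : ∀ k, 0 ≤ η k) (hη_le : ∀ᶠ k in atTop, η k ≤ 1)
    (hηsum : Tendsto (fun n => ∑ k ∈ range n, η k) atTop atTop)
    (ha : ∀ k, a k ∈ Set.Icc 0 1)
    (hy : ∀ k, y (k + 1) = y k + η k * (a (k + 1) * (y k + p) - y k))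
    (hnoise : ∃ L, Tendsto (fun n => ∑ k ∈ range n, η k * (a (k + 1) - μ)) atTop (𝓝 L)) :
    Tendsto y atTop (𝓝 Δ) := by
  obtain ⟨L, hL⟩ := hnoise
  set S := fun n => ∑ k ∈ range n, η k * (a (k + 1) - μ)
  set d := fun k => η k * (1 - a (k + 1))
  have hd01 : ∀ᶠ k in atTop, d k ∈ Set.Icc 0 1 := by
    filter_upwards [hη_le] with k hk
    obtain ⟨ha0, ha1⟩ := ha (k + 1)
    exact ⟨mul_nonneg (hη k) (by linarith), by nlinarith [hη k]⟩
  have hdsum : Tendsto (fun n => ∑ k ∈ range n, d k) atTop atTop := by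
    have hμ1 : 0 < 1 - μ := by
      rw [hμ, one_sub_div hΔp.ne', add_sub_cancel_left]; exact div_pos hp hΔp
    refine ((hηsum.const_mul_atTop hμ1).atTop_add hL.neg).congr fun n => ?_
    simp only [S, d, mul_sum, ← sum_neg_distrib, ← sum_add_distrib]
    exact sum_congr rfl fun k _ => by ring
  have hu : ∀ n, y (n + 1) - Δ =
      (1 - d n) * (y n - Δ) + ((Δ + p) * S (n + 1) - (Δ + p) * S n) := by
    intro n
    simp only [S, d, sum_range_succ, hy n, hμ]
    field_simp
    ring
  have hu0 := tendsto_zero_of_eq_one_sub_mul_add_sub (u := fun n => y n - Δ) hu hd01 hdsum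
    (hL.const_mul _)
  simpa using hu0.add_const Δ

namespace ProbabilityTheory

variable {Ω : Type*} [MeasurableSpace Ω] {P : Measure Ω}

theorem iIndepFun.martingale_sum_range_succ {X : ℕ → Ω → ℝ}
    (hXm : ∀ k, StronglyMeasurable (X k)) (hX : iIndepFun X P) (hXi : ∀ k, Integrable (X k) P)
    (hX0 : ∀ k, P[X k] = 0) :
    Martingale (fun n => ∑ k ∈ range (n + 1), X k) (Filtration.natural X hXm) P := by
  have := hX.isProbabilityMeasure
  set ℱ := Filtration.natural X hXm
  have hadp : StronglyAdapted ℱ fun n => ∑ k ∈ range (n + 1), X k := fun n =>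
    Finset.stronglyMeasurable_sum _ fun k hk =>
      (Filtration.stronglyAdapted_natural hXm k).mono
        (ℱ.mono (Nat.lt_succ_iff.1 (mem_range.1 hk)))
  have hint : ∀ n, Integrable (∑ k ∈ range (n + 1), X k) P := fun n =>
    integrable_finsetSum' _ fun k _ => hXi k
  refine martingale_nat hadp hint fun n => ?_
  have hnext : P[X (n + 1) | ℱ n] =ᵐ[P] fun _ => 0 := by
    simpa only [hX0] using hX.condExp_natural_ae_eq_of_lt hXm (Nat.lt_succ_self n)
  rw [sum_range_succ _ (n + 1)]
  filter_upwards [condExp_add (hint n) (hXi (n + 1)) (ℱ n), hnext] with ω h1 h2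
  rw [h1, Pi.add_apply, h2, condExp_of_stronglyMeasurable (ℱ.le n) (hadp n) (hint n)]
  simp

theorem eLpNorm_one_le_sqrt_variance [IsProbabilityMeasure P] {X : Ω → ℝ} (hX : MemLp X 2 P)
    (h0 : P[X] = 0) : eLpNorm X 1 P ≤ ENNReal.ofReal √(Var[X; P]) := by
  calc eLpNorm X 1 P ≤ eLpNorm X 2 P :=
        eLpNorm_le_eLpNorm_of_exponent_le one_le_two hX.aestronglyMeasurable
    _ = ENNReal.ofReal √(Var[X; P]) := by
        rw [hX.eLpNorm_eq_integral_rpow_norm two_ne_zero ENNReal.ofNat_ne_top,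
          variance_of_integral_eq_zero hX.aestronglyMeasurable.aemeasurable h0,
          Real.sqrt_eq_rpow]
        norm_num [Real.norm_eq_abs]

theorem iIndepFun.ae_exists_tendsto_sum_range {X : ℕ → Ω → ℝ}
    (hXm : ∀ k, StronglyMeasurable (X k)) (hX : iIndepFun X P) (hX2 : ∀ k, MemLp (X k) 2 P)
    (hX0 : ∀ k, P[X k] = 0) (hvar : Summable fun k => Var[X k; P]) :
    ∀ᵐ ω ∂P, ∃ L, Tendsto (fun n => ∑ k ∈ range n, X k ω) atTop (𝓝 L) := by
  have := hX.isProbabilityMeasure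
  set V := ∑' k, Var[X k; P]
  have hM2 : ∀ n, MemLp (∑ k ∈ range (n + 1), X k) 2 P := fun n =>
    memLp_finsetSum' _ fun k _ => hX2 k
  have hM0 : ∀ n, P[∑ k ∈ range (n + 1), X k] = 0 := fun n => by
    simp only [Finset.sum_apply]
    rw [integral_finsetSum _ fun k _ => (hX2 k).integrable one_le_two]
    simp [hX0]
  have hvarM : ∀ n, Var[∑ k ∈ range (n + 1), X k; P] ≤ V := fun n => by
    rw [IndepFun.variance_sum (fun k _ => hX2 k) fun i _ j _ hij => hX.indepFun hij]
    exact hvar.sum_le_tsum _ fun k _ => variance_nonneg _ _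
  have hbdd : ∀ n, eLpNorm (∑ k ∈ range (n + 1), X k) 1 P ≤ (√V).toNNReal := fun n =>
    (eLpNorm_one_le_sqrt_variance (hM2 n) (hM0 n)).trans
      (ENNReal.ofReal_le_ofReal (Real.sqrt_le_sqrt (hvarM n)))
  have hmart := hX.martingale_sum_range_succ hXm (fun k => (hX2 k).integrable one_le_two) hX0
  filter_upwards [hmart.submartingale.exists_ae_tendsto_of_bdd hbdd] with ω ⟨L, hL⟩
  exact ⟨L, (tendsto_add_atTop_iff_nat 1).1 (by simpa only [Finset.sum_apply] using hL)⟩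

theorem integral_eq_measureReal_of_eq_zero_or_eq_one {f : Ω → ℝ} (hf : Measurable f)
    (h01 : ∀ ω, f ω = 0 ∨ f ω = 1) :
    ∫ ω, f ω ∂P = P.real {ω | f ω = 1} := by
  have hind : f = {ω | f ω = 1}.indicator fun _ => 1 := by
    ext ω
    rcases h01 ω with h | h <;> simp [Set.indicator, h]
  conv_lhs => rw [hind]
  rw [integral_indicator_const _ (s := {ω | f ω = 1}) (hf (measurableSet_singleton 1)),
    smul_eq_mul, mul_one]

theorem ae_exists_tendsto_sum_mul_sub {I : ℕ → Ω → ℝ} {μ : ℝ} (hmeas : ∀ k, Measurable (I k))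
    (hI : ∀ k ω, I k ω ∈ Set.Icc 0 1) (hindep : iIndepFun I P) (hmean : ∀ k, P[I k] = μ)
    {η : ℕ → ℝ} (hη2 : Summable fun k => η k ^ 2) :
    ∀ᵐ ω ∂P, ∃ L, Tendsto (fun n => ∑ k ∈ range n, η k * (I k ω - μ)) atTop (𝓝 L) := by
  have := hindep.isProbabilityMeasure
  set X : ℕ → Ω → ℝ := fun k ω => η k * (I k ω - μ)
  have hXm : ∀ k, Measurable (X k) := fun k => ((hmeas k).sub_const μ).const_mul (η k)
  have hI2 : ∀ k, MemLp (I k) 2 P := fun k =>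
    MemLp.of_bound (hmeas k).aestronglyMeasurable 1 (Eventually.of_forall fun ω => by
      rw [Real.norm_eq_abs, abs_le]; constructor <;> linarith [(hI k ω).1, (hI k ω).2])
  have hX2 : ∀ k, MemLp (X k) 2 P := fun k => ((hI2 k).sub (memLp_const μ)).const_mul (η k)
  have hX0 : ∀ k, P[X k] = 0 := fun k => by
    simp only [X]
    rw [integral_const_mul, integral_sub ((hI2 k).integrable one_le_two) (integrable_const μ),
      hmean k]
    simp
  have hvar : ∀ k, Var[X k; P] ≤ η k ^ 2 * (1 / 4) := fun k => by
    simp only [X]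
    rw [variance_const_mul, variance_sub_const (hmeas k).aestronglyMeasurable]
    gcongr
    exact (variance_le_sq_of_bounded (μ := P) (Eventually.of_forall (hI k))
      (hmeas k).aemeasurable).trans_eq (by norm_num)
  exact iIndepFun.ae_exists_tendsto_sum_range (fun k => (hXm k).stronglyMeasurable)
    (hindep.comp (fun k x => η k * (x - μ)) fun k => (measurable_id.sub_const μ).const_mul _)
    hX2 hX0 ((hη2.mul_right (1 / 4)).of_nonneg_of_le (fun k => variance_nonneg _ _) hvar)

end ProbabilityTheory

theorem sa_estimator_converges_ae_general
    {Ω : Type*} [MeasurableSpace Ω] (P : Measure Ω)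
    (Δ p : ℝ) (hΔ : 0 < Δ) (hp : 0 < p)
    (μ : ℝ) (hμ : μ = Δ / (Δ + p))
    (I : ℕ → Ω → ℝ) (hmeas : ∀ k, Measurable (I k))
    (hvals : ∀ k ω, I k ω = 0 ∨ I k ω = 1)
    (hber : ∀ k, P {ω | I k ω = 1} = ENNReal.ofReal μ)
    (hindep : iIndepFun I P)
    (η : ℕ → ℝ) (hη : ∀ k, 0 < η k)
    (hη1 : ¬ Summable η) (hη2 : Summable (fun k => (η k) ^ 2))
    (y : ℕ → Ω → ℝ)
    (hy : ∀ k ω, y (k + 1) ω = y k ω + η k * (I (k + 1) ω * (y k ω + p) - y k ω)) :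
    ∀ᵐ ω ∂P, Tendsto (fun k => y k ω) atTop (nhds Δ) := by
  have hμ0 : 0 ≤ μ := hμ ▸ by positivity
  have hI : ∀ k ω, I k ω ∈ Set.Icc 0 1 := fun k ω => by rcases hvals k ω with h | h <;> simp [h]
  have hmean : ∀ k, P[I k] = μ := fun k => by
    rw [integral_eq_measureReal_of_eq_zero_or_eq_one (hmeas k) (hvals k), measureReal_def,
      hber k, ENNReal.toReal_ofReal hμ0]
  have hnoise := ae_exists_tendsto_sum_mul_sub (fun k => hmeas (k + 1)) (fun k => hI (k + 1))
    (hindep.precomp (add_left_injective 1)) (fun k => hmean (k + 1)) hη2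
  have hηsum := (not_summable_iff_tendsto_nat_atTop_of_nonneg fun k => (hη k).le).1 hη1
  have hη_le_one : ∀ᶠ k in atTop, η k ≤ 1 := by
    filter_upwards [hη2.tendsto_atTop_zero.eventually_le_const one_pos] with k hk
    exact (pow_le_one_iff_of_nonneg (hη k).le two_ne_zero).1 hk
  filter_upwards [hnoise] with ω hω
  exact tendsto_of_sa_recursion hp (by linarith) hμ (fun k => (hη k).le) hη_le_one hηsum
    (fun k => hI k ω) (fun k => hy k ω) hω

/-- almost-sure convergence of the SA estimator
`y_{k+1} = y_k + η_k (I_{k+1} (y_k + p) - y_k)` to `Δ`, where the `I_k` are i.i.d.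
Bernoulli with parameter `μ = Δ/(Δ+p)` and `η_k > 0`, `∑ η_k = ∞`, `∑ η_k² < ∞`. -/
theorem sa_estimator_converges_ae
    {Ω : Type*} [MeasurableSpace Ω] (P : Measure Ω) [IsProbabilityMeasure P]
    (Δ p : ℝ) (hΔ : 0 < Δ) (hp : 0 < p)
    (μ : ℝ) (hμ : μ = Δ / (Δ + p))
    (I : ℕ → Ω → ℝ) (hmeas : ∀ k, Measurable (I k))
    (hvals : ∀ k ω, I k ω = 0 ∨ I k ω = 1)
    (hber : ∀ k, P {ω | I k ω = 1} = ENNReal.ofReal μ)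
    (hindep : iIndepFun I P)
    (η : ℕ → ℝ) (hη : ∀ k, 0 < η k)
    (hη1 : ¬ Summable η) (hη2 : Summable (fun k => (η k) ^ 2))
    (y : ℕ → Ω → ℝ) (y0 : ℝ) (hy0 : ∀ ω, y 0 ω = y0)
    (hy : ∀ k ω, y (k + 1) ω = y k ω + η k * (I (k + 1) ω * (y k ω + p) - y k ω)) :
    ∀ᵐ ω ∂P, Tendsto (fun k => y k ω) atTop (nhds Δ) :=
  sa_estimator_converges_ae_general P Δ p hΔ hp μ hμ I hmeas hvals hber hindep η hη hη1 hη2 y hy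
end
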